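/- Let h₁, h₂: ℂ → ℝ be smooth solutions of the Kazdan–Warner equation Δh + (1/2)(e^{-2h} ∑_{j=1}^N |ψ_j(z)|² - 1) = 0 on ℂ, where ψ₁,...,ψ_N are polynomials not all zero. Suppose h₁ - h₂ has finite Dirichlet energy (|d(h₁-h₂)|_{L²} < ∞) and the integral ∫_ℂ (h₁-h₂)(e^{-2h₂} - e^{-2h₁})∑|ψ_j|² is finite. Then, since (h₁-h₂)(e^{-2h₂}-e^{-2h₁}) ≥ 0 pointwise and integration by parts is valid under the stated decay hypotheses (both (e^{-2h_i}∑|ψ_j|² - 1)|z|^{4-ε} → 0 as |z| → ∞), it follows that h₁ = h₂. -/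

import Mathlib

/-- The Euclidean Laplacian on ℂ ≅ ℝ²: Δh = ∂²h/∂x² + ∂²h/∂y². -/
noncomputable def lap (h : ℂ → ℝ) (z : ℂ) : ℝ :=
  fderiv ℝ (fun w => fderiv ℝ h w 1) z 1 +
    fderiv ℝ (fun w => fderiv ℝ h w Complex.I) z Complex.I

open Filter

section Aux

lemma secondDeriv_nonpos_of_isLocalMax {g : ℝ → ℝ} (hg : ContDiff ℝ (⊤ : ℕ∞) g)
    (hmax : IsLocalMax g 0) : deriv (deriv g) 0 ≤ 0 := by
  by_contra hpos
  push_neg at hpos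
  have hg1 : Differentiable ℝ g := hg.differentiable (by simp)
  have hgi : ContDiff ℝ (⊤ : ℕ∞) (deriv g) := (contDiff_infty_iff_deriv.mp hg).2
  have hgi1 : Differentiable ℝ (deriv g) := hgi.differentiable (by simp)
  have hg'' : Continuous (deriv (deriv g)) :=
    ((contDiff_infty_iff_deriv.mp hgi).2).continuous
  have hd0 : deriv g 0 = 0 := hmax.deriv_eq_zero
  have hev : ∀ᶠ t in nhds (0:ℝ), 0 < deriv (deriv g) t :=
    (hg''.continuousAt (x := 0)).eventually (eventually_gt_nhds hpos)
  obtain ⟨a, ha, hball⟩ := Metric.eventually_nhds_iff.mp hev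
  obtain ⟨b, hb, hmb⟩ := Metric.eventually_nhds_iff.mp hmax
  set c := min (a/2) (b/2) with hc
  have hc0 : 0 < c := lt_min (by linarith) (by linarith)
  have hsub : Set.Icc (0:ℝ) c ⊆ Metric.ball (0:ℝ) a := by
    intro t ht
    simp only [Metric.mem_ball, Real.dist_eq, sub_zero]
    rw [abs_of_nonneg ht.1]
    calc t ≤ c := ht.2
    _ ≤ a/2 := min_le_left _ _
    _ < a := by linarith
  have hmono : StrictMonoOn (deriv g) (Set.Icc 0 c) := by
    apply strictMonoOn_of_deriv_pos (convex_Icc _ _) (hgi1.continuous.continuousOn)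
    intro t ht
    rw [interior_Icc] at ht
    exact hball (hsub ⟨le_of_lt ht.1, le_of_lt ht.2⟩)
  have hder_pos : ∀ t ∈ Set.Ioc (0:ℝ) c, 0 < deriv g t := by
    intro t ht
    have := hmono (Set.left_mem_Icc.mpr hc0.le) ⟨ht.1.le, ht.2⟩ ht.1
    rwa [hd0] at this
  have hmono2 : StrictMonoOn g (Set.Icc 0 c) := by
    apply strictMonoOn_of_deriv_pos (convex_Icc _ _) (hg1.continuous.continuousOn)
    intro t ht
    rw [interior_Icc] at ht
    exact hder_pos t ⟨ht.1, ht.2.le⟩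
  have h1 : g 0 < g c := hmono2 (Set.left_mem_Icc.mpr hc0.le) (Set.right_mem_Icc.mpr hc0.le) hc0
  have h2 : g c ≤ g 0 := by
    apply hmb
    simp only [Real.dist_eq, sub_zero]
    rw [abs_of_nonneg hc0.le]
    calc c ≤ b/2 := min_le_right _ _
    _ < b := by linarith
  linarith

lemma fderiv_apply_contDiff {f : ℂ → ℝ} (hf : ContDiff ℝ (⊤ : ℕ∞) f) (e : ℂ) :
    ContDiff ℝ (⊤ : ℕ∞) (fun w => fderiv ℝ f w e) :=
  (hf.fderiv_right (by exact_mod_cast le_top)).clm_apply contDiff_const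

lemma line_secondDeriv {u : ℂ → ℝ} (hu : ContDiff ℝ (⊤ : ℕ∞) u) (z₀ e : ℂ) :
    deriv (deriv (fun t : ℝ => u (z₀ + t • e))) 0
      = fderiv ℝ (fun w => fderiv ℝ u w e) z₀ e := by
  have hline : ∀ t : ℝ, HasDerivAt (fun s : ℝ => z₀ + s • e) e t := by
    intro t
    simpa using (hasDerivAt_id t).smul_const e |>.const_add z₀
  have hud : Differentiable ℝ u := hu.differentiable (by simp)
  have hg' : ∀ t : ℝ, deriv (fun s : ℝ => u (z₀ + s • e)) t
      = fderiv ℝ u (z₀ + t • e) e := by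
    intro t
    exact ((hud (z₀ + t • e)).hasFDerivAt.comp_hasDerivAt t (hline t)).deriv
  rw [funext hg']
  have hφd : Differentiable ℝ (fun w => fderiv ℝ u w e) :=
    (fderiv_apply_contDiff hu e).differentiable (by simp)
  have := ((hφd (z₀ + (0:ℝ) • e)).hasFDerivAt.comp_hasDerivAt 0 (hline 0)).deriv
  simpa [Function.comp_def] using this

lemma lap_nonpos_of_isLocalMax {u : ℂ → ℝ} (hu : ContDiff ℝ (⊤ : ℕ∞) u) {z₀ : ℂ}
    (hmax : IsLocalMax u z₀) : lap u z₀ ≤ 0 := by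
  have key : ∀ e : ℂ, fderiv ℝ (fun w => fderiv ℝ u w e) z₀ e ≤ 0 := by
    intro e
    rw [← line_secondDeriv hu z₀ e]
    have hline : ContDiff ℝ (⊤ : ℕ∞) (fun t : ℝ => z₀ + t • e) :=
      contDiff_const.add (contDiff_id.smul contDiff_const)
    have hcont : ContinuousAt (fun t : ℝ => z₀ + t • e) 0 := hline.continuous.continuousAt
    have hmax' : IsLocalMax (fun t : ℝ => u (z₀ + t • e)) 0 := by
      have htend : Filter.Tendsto (fun t : ℝ => z₀ + t • e) (nhds 0) (nhds z₀) := by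
        have := hcont.tendsto
        simpa using this
      have hev := htend.eventually hmax
      filter_upwards [hev] with t ht
      simpa using ht
    exact secondDeriv_nonpos_of_isLocalMax (hu.comp hline) hmax'
  have := key 1
  have := key Complex.I
  unfold lap
  linarith

lemma lap_add {f g : ℂ → ℝ} (hf : ContDiff ℝ (⊤ : ℕ∞) f) (hg : ContDiff ℝ (⊤ : ℕ∞) g)
    (z : ℂ) : lap (fun z => f z + g z) z = lap f z + lap g z := by
  have hfd : Differentiable ℝ f := hf.differentiable (by simp)
  have hgd : Differentiable ℝ g := hg.differentiable (by simp)
  have key : ∀ e : ℂ, fderiv ℝ (fun w => fderiv ℝ (fun x => f x + g x) w e) z e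
      = fderiv ℝ (fun w => fderiv ℝ f w e) z e + fderiv ℝ (fun w => fderiv ℝ g w e) z e := by
    intro e
    have h1 : (fun w => fderiv ℝ (fun x => f x + g x) w e)
        = fun w => fderiv ℝ f w e + fderiv ℝ g w e := by
      funext w
      rw [fderiv_fun_add (hfd w) (hgd w)]
      rfl
    rw [h1, fderiv_fun_add
      (((fderiv_apply_contDiff hf e).differentiable (by simp)) z)
      (((fderiv_apply_contDiff hg e).differentiable (by simp)) z)]
    rfl
  unfold lap
  rw [key 1, key Complex.I]
  ring

lemma lap_const_mul {f : ℂ → ℝ} (hf : ContDiff ℝ (⊤ : ℕ∞) f) (c : ℝ)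
    (z : ℂ) : lap (fun z => c * f z) z = c * lap f z := by
  have hfd : Differentiable ℝ f := hf.differentiable (by simp)
  have key : ∀ e : ℂ, fderiv ℝ (fun w => fderiv ℝ (fun x => c * f x) w e) z e
      = c * fderiv ℝ (fun w => fderiv ℝ f w e) z e := by
    intro e
    have h1 : (fun w => fderiv ℝ (fun x => c * f x) w e)
        = fun w => c * fderiv ℝ f w e := by
      funext w
      rw [fderiv_const_mul (hfd w)]
      rfl
    rw [h1, fderiv_const_mul
      (((fderiv_apply_contDiff hf e).differentiable (by simp)) z)]
    rfl
  unfold lap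
  rw [key 1, key Complex.I]
  ring

lemma lap_sub {f g : ℂ → ℝ} (hf : ContDiff ℝ (⊤ : ℕ∞) f) (hg : ContDiff ℝ (⊤ : ℕ∞) g)
    (z : ℂ) : lap (fun z => f z - g z) z = lap f z - lap g z := by
  have h1 : (fun z => f z - g z) = (fun z => f z + (-1) * g z) := by funext z; ring
  rw [h1, lap_add hf (contDiff_const.mul hg) z, lap_const_mul hg (-1) z]
  ring

lemma lap_normSq (z : ℂ) : lap (fun w : ℂ => w.re ^ 2 + w.im ^ 2) z = 4 := by
  have hre : ∀ w : ℂ, HasFDerivAt (fun x : ℂ => x.re) (Complex.reCLM : ℂ →L[ℝ] ℝ) w :=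
    fun w => Complex.reCLM.hasFDerivAt
  have him : ∀ w : ℂ, HasFDerivAt (fun x : ℂ => x.im) (Complex.imCLM : ℂ →L[ℝ] ℝ) w :=
    fun w => Complex.imCLM.hasFDerivAt
  have hq : ∀ w : ℂ, HasFDerivAt (fun x : ℂ => x.re ^ 2 + x.im ^ 2)
      ((w.re • Complex.reCLM + w.re • Complex.reCLM)
        + (w.im • Complex.imCLM + w.im • Complex.imCLM)) w := by
    intro w
    have h1 := (hre w).mul (hre w)
    have h2 := (him w).mul (him w)
    have := h1.add h2
    simpa [pow_two, Pi.mul_def, Pi.add_def] using this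
  have key : ∀ e : ℂ, fderiv ℝ (fun w => fderiv ℝ (fun x : ℂ => x.re ^ 2 + x.im ^ 2) w e) z e
      = 2 * e.re ^ 2 + 2 * e.im ^ 2 := by
    intro e
    have h1 : (fun w => fderiv ℝ (fun x : ℂ => x.re ^ 2 + x.im ^ 2) w e)
        = fun w => 2 * e.re * w.re + 2 * e.im * w.im := by
      funext w
      rw [(hq w).fderiv]
      simp
      ring
    rw [h1]
    have hlin : HasFDerivAt (fun w : ℂ => 2 * e.re * w.re + 2 * e.im * w.im)
        (((2 * e.re) • Complex.reCLM + (2 * e.im) • Complex.imCLM : ℂ →L[ℝ] ℝ)) z := by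
      have h1 := (hre z).const_mul (2 * e.re)
      have h2 := (him z).const_mul (2 * e.im)
      exact h1.add h2
    rw [hlin.fderiv]
    simp
    ring
  unfold lap
  rw [key 1, key Complex.I]
  norm_num

/-- Maximum principle: a smooth function vanishing at infinity whose Laplacian is
nonnegative wherever the function is positive, is nonpositive. -/
lemma nonpos_of_maxPrinciple {u : ℂ → ℝ} (hu : ContDiff ℝ (⊤ : ℕ∞) u)
    (h0 : Tendsto u (cocompact ℂ) (nhds 0))
    (hl : ∀ z, 0 < u z → 0 ≤ lap u z) : ∀ z, u z ≤ 0 := by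
  by_contra hcon
  push_neg at hcon
  obtain ⟨z₁, hz₁⟩ := hcon
  set c := u z₁ with hc
  have hc0 : 0 < c := hz₁
  have hev : ∀ᶠ z in cocompact ℂ, |u z| < c / 2 := by
    have := Metric.tendsto_nhds.mp h0 (c / 2) (by linarith)
    simpa [Real.dist_eq] using this
  obtain ⟨K, hKc, hKs⟩ := mem_cocompact.mp hev
  set K' := K ∪ {z₁} with hK'
  have hK'c : IsCompact K' := hKc.union isCompact_singleton
  have hz₁K' : z₁ ∈ K' := Set.mem_union_right _ rfl
  obtain ⟨z₀, hz₀K, hz₀max⟩ :=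
    hK'c.exists_isMaxOn ⟨z₁, hz₁K'⟩ (hu.continuous.continuousOn)
  set M := u z₀ with hM
  have hMc : c ≤ M := hz₀max hz₁K'
  have hglobal : ∀ z, u z ≤ M := by
    intro z
    by_cases hz : z ∈ K'
    · exact hz₀max hz
    · have hzK : z ∈ Kᶜ := fun h => hz (Set.mem_union_left _ h)
      have := hKs hzK
      simp only [Set.mem_setOf_eq] at this
      have : u z < M := by
        calc u z ≤ |u z| := le_abs_self _
        _ < c/2 := this
        _ ≤ M := by linarith
      exact this.le
  obtain ⟨R, hR0, hRK⟩ := hK'c.isBounded.subset_ball_lt 0 0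
  set δ := c / (4 * R ^ 2) with hδ
  have hδ0 : 0 < δ := by positivity
  set w := fun z : ℂ => u z + δ * (z.re ^ 2 + z.im ^ 2) with hw
  have hqcd : ContDiff ℝ (⊤ : ℕ∞) (fun z : ℂ => z.re ^ 2 + z.im ^ 2) := by
    exact (Complex.reCLM.contDiff.pow 2).add (Complex.imCLM.contDiff.pow 2)
  have hwcd : ContDiff ℝ (⊤ : ℕ∞) w := hu.add (contDiff_const.mul hqcd)
  have hqle : ∀ z : ℂ, z ∈ Metric.closedBall (0:ℂ) R → z.re ^ 2 + z.im ^ 2 ≤ R ^ 2 := by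
    intro z hz
    have h1 : z.re ^ 2 + z.im ^ 2 = ‖z‖ ^ 2 := by
      rw [← Complex.normSq_eq_norm_sq, Complex.normSq_apply]; ring
    rw [h1]
    have : ‖z‖ ≤ R := by simpa using Metric.mem_closedBall.mp hz
    nlinarith [norm_nonneg z]
  obtain ⟨p, hpB, hpmax⟩ := (isCompact_closedBall (0:ℂ) R).exists_isMaxOn
    ⟨0, Metric.mem_closedBall_self hR0.le⟩ (hwcd.continuous.continuousOn)
  have hz₀B : z₀ ∈ Metric.closedBall (0:ℂ) R := Metric.ball_subset_closedBall (hRK hz₀K)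
  have hwp : c ≤ w p := by
    have h1 : w z₀ ≤ w p := hpmax hz₀B
    have h2 : M ≤ w z₀ := by
      have : 0 ≤ δ * (z₀.re ^ 2 + z₀.im ^ 2) := by positivity
      simp only [hw]; linarith
    linarith
  by_cases hpb : p ∈ Metric.ball (0:ℂ) R
  · have hloc : IsLocalMax w p := by
      have hmem : Metric.ball (0:ℂ) R ∈ nhds p := Metric.isOpen_ball.mem_nhds hpb
      filter_upwards [hmem] with z hz
      exact hpmax (Metric.ball_subset_closedBall hz)
    have hup : 0 < u p := by
      have := hqle p hpB
      have hδq : δ * (p.re ^ 2 + p.im ^ 2) ≤ δ * R ^ 2 := by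
        apply mul_le_mul_of_nonneg_left this hδ0.le
      have hδR : δ * R ^ 2 = c / 4 := by
        rw [hδ, div_mul_eq_mul_div, div_eq_div_iff (by positivity) (by norm_num)]; ring
      have : u p = w p - δ * (p.re ^ 2 + p.im ^ 2) := by simp [hw]
      rw [this]
      linarith
    have hlap : 0 ≤ lap u p := hl p hup
    have hlapw : lap w p = lap u p + 4 * δ := by
      rw [hw]
      rw [lap_add hu (contDiff_const.mul hqcd) p, lap_const_mul hqcd δ p, lap_normSq]
      ring
    have := lap_nonpos_of_isLocalMax hwcd hloc
    rw [hlapw] at this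
    linarith
  · have hpK' : p ∉ K' := fun h => hpb (hRK h)
    have hpK : p ∈ Kᶜ := fun h => hpK' (Set.mem_union_left _ h)
    have hup : u p < c / 2 := by
      have := hKs hpK
      simp only [Set.mem_setOf_eq] at this
      exact lt_of_le_of_lt (le_abs_self _) this
    have hδq : δ * (p.re ^ 2 + p.im ^ 2) ≤ c / 4 := by
      have h1 := hqle p hpB
      have : δ * (p.re ^ 2 + p.im ^ 2) ≤ δ * R ^ 2 :=
        mul_le_mul_of_nonneg_left h1 hδ0.le
      have hδR : δ * R ^ 2 = c / 4 := by rw [hδ, div_mul_eq_mul_div, div_eq_div_iff (by positivity) (by norm_num)]; ring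
      linarith
    have : w p < c := by
      simp only [hw]
      linarith
    linarith

/-- The decay hypotheses force h₁ - h₂ → 0 at infinity. -/
lemma tendsto_sub_cocompact (N : ℕ) (ψ : Fin N → Polynomial ℂ) (hψ : ∃ j, ψ j ≠ 0)
    (h₁ h₂ : ℂ → ℝ)
    (ε : ℝ) (hε4 : ε < 4)
    (hdecay₁ : Filter.Tendsto
      (fun z : ℂ => (Real.exp (-(2 * h₁ z)) * (∑ j, ‖(ψ j).eval z‖ ^ 2) - 1) * ‖z‖ ^ ((4:ℝ) - ε))
      (Filter.cocompact ℂ) (nhds 0))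
    (hdecay₂ : Filter.Tendsto
      (fun z : ℂ => (Real.exp (-(2 * h₂ z)) * (∑ j, ‖(ψ j).eval z‖ ^ 2) - 1) * ‖z‖ ^ ((4:ℝ) - ε))
      (Filter.cocompact ℂ) (nhds 0)) :
    Tendsto (fun z => h₁ z - h₂ z) (cocompact ℂ) (nhds 0) := by
  set S := fun z : ℂ => (∑ j, ‖(ψ j).eval z‖ ^ 2) with hS
  have hpow : Tendsto (fun z : ℂ => ‖z‖ ^ ((4:ℝ) - ε)) (cocompact ℂ) atTop :=
    (tendsto_rpow_atTop (by linarith)).comp tendsto_norm_cocompact_atTop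
  have hne : ∀ᶠ z : ℂ in cocompact ℂ, z ≠ 0 := by
    rw [eventually_iff, mem_cocompact]
    exact ⟨{0}, isCompact_singleton, fun z hz => hz⟩
  have key : ∀ h : ℂ → ℝ, Tendsto
      (fun z : ℂ => (Real.exp (-(2 * h z)) * S z - 1) * ‖z‖ ^ ((4:ℝ) - ε))
      (cocompact ℂ) (nhds 0) →
      Tendsto (fun z : ℂ => Real.exp (-(2 * h z)) * S z) (cocompact ℂ) (nhds 1) := by
    intro h hd
    have h1 : Tendsto (fun z : ℂ => Real.exp (-(2 * h z)) * S z - 1) (cocompact ℂ) (nhds 0) := by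
      have hmul : Tendsto
          (fun z : ℂ => ((Real.exp (-(2 * h z)) * S z - 1) * ‖z‖ ^ ((4:ℝ) - ε))
            * (‖z‖ ^ ((4:ℝ) - ε))⁻¹) (cocompact ℂ) (nhds (0 * 0)) :=
        hd.mul hpow.inv_tendsto_atTop
      rw [mul_zero] at hmul
      apply hmul.congr'
      filter_upwards [hne] with z hz
      have : (0:ℝ) < ‖z‖ ^ ((4:ℝ) - ε) := Real.rpow_pos_of_pos (norm_pos_iff.mpr hz) _
      rw [mul_inv_cancel_right₀ (ne_of_gt this)]
    have := h1.add_const 1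
    simpa using this
  have k₁ := key h₁ hdecay₁
  have k₂ := key h₂ hdecay₂
  obtain ⟨j₀, hj₀⟩ := hψ
  have hSne : ∀ᶠ z : ℂ in cocompact ℂ, S z ≠ 0 := by
    rw [eventually_iff, mem_cocompact]
    refine ⟨{z : ℂ | (ψ j₀).IsRoot z}, (Polynomial.finite_setOf_isRoot hj₀).isCompact, ?_⟩
    intro z hz
    simp only [Set.mem_compl_iff, Set.mem_setOf_eq] at hz ⊢
    intro hS0
    apply hz
    have hterm : ‖(ψ j₀).eval z‖ ^ 2 = 0 := by
      have hnn : ∀ j ∈ Finset.univ, (0:ℝ) ≤ ‖(ψ j).eval z‖ ^ 2 := fun j _ => by positivity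
      exact (Finset.sum_eq_zero_iff_of_nonneg hnn).mp hS0 j₀ (Finset.mem_univ _)
    simpa [Polynomial.IsRoot] using pow_eq_zero_iff (n := 2) (by norm_num) |>.mp hterm
  have hratio : Tendsto (fun z : ℂ => (Real.exp (-(2 * h₁ z)) * S z)
      / (Real.exp (-(2 * h₂ z)) * S z)) (cocompact ℂ) (nhds 1) := by
    have := k₁.div k₂ one_ne_zero
    rwa [div_one] at this
  have hexp : Tendsto (fun z : ℂ => Real.exp (-(2 * (h₁ z - h₂ z)))) (cocompact ℂ) (nhds 1) := by
    apply hratio.congr'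
    filter_upwards [hSne] with z hz
    rw [mul_div_mul_right _ _ hz, ← Real.exp_sub]
    ring_nf
  have hlog : Tendsto (fun z : ℂ => -(2 * (h₁ z - h₂ z))) (cocompact ℂ) (nhds 0) := by
    have hcont : ContinuousAt Real.log 1 := Real.continuousAt_log one_ne_zero
    have := hcont.tendsto.comp hexp
    rw [Real.log_one] at this
    apply this.congr
    intro z
    simp [Real.log_exp]
  have := hlog.const_mul (-(1/2) : ℝ)
  rw [mul_zero] at this
  apply this.congr
  intro z
  ring

end Aux

/- STATEMENT 3: uniqueness for the Kazdan–Warner equation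
Δh + (1/2)(e^{-2h}∑|ψ_j|² - 1) = 0 on ℂ, ψ_j polynomials not all zero,
under decay |(e^{-2hᵢ}∑|ψ_j|² - 1)|z|^{4-ε}| → 0 and the stated integrability hypotheses. -/
theorem stmt3 (N : ℕ) (ψ : Fin N → Polynomial ℂ) (hψ : ∃ j, ψ j ≠ 0)
    (h₁ h₂ : ℂ → ℝ) (hs₁ : ContDiff ℝ (⊤ : ℕ∞) h₁) (hs₂ : ContDiff ℝ (⊤ : ℕ∞) h₂)
    (heq₁ : ∀ z : ℂ, lap h₁ z
      + (1/2) * (Real.exp (-(2 * h₁ z)) * (∑ j, ‖(ψ j).eval z‖ ^ 2) - 1) = 0)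
    (heq₂ : ∀ z : ℂ, lap h₂ z
      + (1/2) * (Real.exp (-(2 * h₂ z)) * (∑ j, ‖(ψ j).eval z‖ ^ 2) - 1) = 0)
    (ε : ℝ) (hε0 : 0 < ε) (hε4 : ε < 4)
    (hdecay₁ : Filter.Tendsto
      (fun z : ℂ => (Real.exp (-(2 * h₁ z)) * (∑ j, ‖(ψ j).eval z‖ ^ 2) - 1) * ‖z‖ ^ ((4:ℝ) - ε))
      (Filter.cocompact ℂ) (nhds 0))
    (hdecay₂ : Filter.Tendsto
      (fun z : ℂ => (Real.exp (-(2 * h₂ z)) * (∑ j, ‖(ψ j).eval z‖ ^ 2) - 1) * ‖z‖ ^ ((4:ℝ) - ε))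
      (Filter.cocompact ℂ) (nhds 0))
    (hdir : MeasureTheory.Integrable
      (fun z : ℂ => ‖fderiv ℝ (fun w => h₁ w - h₂ w) z‖ ^ 2))
    (hint : MeasureTheory.Integrable
      (fun z : ℂ => (h₁ z - h₂ z) * (Real.exp (-(2 * h₂ z)) - Real.exp (-(2 * h₁ z)))
        * (∑ j, ‖(ψ j).eval z‖ ^ 2))) :
    h₁ = h₂ := by
  have hs₁' : ContDiff ℝ (⊤ : ℕ∞) h₁ := hs₁.of_le (by simp)
  have hs₂' : ContDiff ℝ (⊤ : ℕ∞) h₂ := hs₂.of_le (by simp)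
  have hSnn : ∀ z : ℂ, (0:ℝ) ≤ ∑ j, ‖(ψ j).eval z‖ ^ 2 := by
    intro z
    exact Finset.sum_nonneg fun j _ => by positivity
  -- h₁ - h₂ → 0 at infinity
  have htend : Tendsto (fun z => h₁ z - h₂ z) (cocompact ℂ) (nhds 0) :=
    tendsto_sub_cocompact N ψ hψ h₁ h₂ ε hε4 hdecay₁ hdecay₂
  have htend' : Tendsto (fun z => h₂ z - h₁ z) (cocompact ℂ) (nhds 0) := by
    have := htend.neg
    rw [neg_zero] at this
    apply this.congr
    intro z
    ring
  -- sign of laplacian where positive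
  have hle : ∀ z, h₁ z - h₂ z ≤ 0 := by
    apply nonpos_of_maxPrinciple (hs₁'.sub hs₂') htend
    intro z hz
    rw [lap_sub hs₁' hs₂' z]
    have e₁ := heq₁ z
    have e₂ := heq₂ z
    have hexp : Real.exp (-(2 * h₁ z)) ≤ Real.exp (-(2 * h₂ z)) :=
      Real.exp_le_exp.mpr (by linarith)
    nlinarith [mul_nonneg (sub_nonneg.mpr hexp) (hSnn z)]
  have hge : ∀ z, h₂ z - h₁ z ≤ 0 := by
    apply nonpos_of_maxPrinciple (hs₂'.sub hs₁') htend'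
    intro z hz
    rw [lap_sub hs₂' hs₁' z]
    have e₁ := heq₁ z
    have e₂ := heq₂ z
    have hexp : Real.exp (-(2 * h₂ z)) ≤ Real.exp (-(2 * h₁ z)) :=
      Real.exp_le_exp.mpr (by linarith)
    nlinarith [mul_nonneg (sub_nonneg.mpr hexp) (hSnn z)]
  funext z
  have := hle z
  have := hge z
  linarith
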